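/- The boundary inclusion Sⁿ → Dⁿ⁺¹ of the n-sphere into the (n+1)-ball has the left lifting property with respect to the map M → Λ. (The proof uses that Dⁿ⁺¹ is hereditarily normal: two disjoint closed sets of Sⁿ, pulled back by a map to Λ, extend to disjoint opens.) -/
import Mathlib


open Topology

/-- `HasLift i p`: the map `i` has the left lifting property with respect to `p`
(equivalently, `p` has the right lifting property with respect to `i`). -/
def HasLift {A B X Y : Type*} [TopologicalSpace A] [TopologicalSpace B]
    [TopologicalSpace X] [TopologicalSpace Y] (i : C(A, B)) (p : C(X, Y)) : Prop :=
  ∀ (f : C(A, X)) (g : C(B, Y)), p.comp f = g.comp i →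
    ∃ d : C(B, X), d.comp i = f ∧ p.comp d = g
/-- The three-point space `Λ = {a ← u → b}` with one open point `u` and two closed
points `a`, `b`. -/
inductive Lam | a | u | b

instance : TopologicalSpace Lam where
  IsOpen S := (Lam.a ∈ S → Lam.u ∈ S) ∧ (Lam.b ∈ S → Lam.u ∈ S)
  isOpen_univ := by simp
  isOpen_inter := by
    intro s t hs ht
    exact ⟨fun h => ⟨hs.1 h.1, ht.1 h.2⟩, fun h => ⟨hs.2 h.1, ht.2 h.2⟩⟩
  isOpen_sUnion := by
    intro S hS
    constructor
    · rintro ⟨s, hs, has⟩; exact ⟨s, hs, ((hS s hs).1 has)⟩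
    · rintro ⟨s, hs, hbs⟩; exact ⟨s, hs, ((hS s hs).2 hbs)⟩

/-- The five-point space `M = {a ← u → x ← v → b}` with two open points `u`, `v`
and three closed points `a`, `x`, `b`. -/
inductive Mspace | a | u | x | v | b

instance : TopologicalSpace Mspace where
  IsOpen S := (Mspace.a ∈ S → Mspace.u ∈ S) ∧ (Mspace.x ∈ S → Mspace.u ∈ S ∧ Mspace.v ∈ S) ∧
    (Mspace.b ∈ S → Mspace.v ∈ S)
  isOpen_univ := by simp
  isOpen_inter := by
    intro s t hs ht
    exact ⟨fun h => ⟨hs.1 h.1, ht.1 h.2⟩,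
      fun h => ⟨⟨(hs.2.1 h.1).1, (ht.2.1 h.2).1⟩, ⟨(hs.2.1 h.1).2, (ht.2.1 h.2).2⟩⟩,
      fun h => ⟨hs.2.2 h.1, ht.2.2 h.2⟩⟩
  isOpen_sUnion := by
    intro S hS
    refine ⟨?_, ?_, ?_⟩
    · rintro ⟨s, hs, h⟩; exact ⟨s, hs, (hS s hs).1 h⟩
    · rintro ⟨s, hs, h⟩; exact ⟨⟨s, hs, ((hS s hs).2.1 h).1⟩, ⟨s, hs, ((hS s hs).2.1 h).2⟩⟩
    · rintro ⟨s, hs, h⟩; exact ⟨s, hs, (hS s hs).2.2 h⟩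

/-- The map `M → Λ` sending `a ↦ a`, `b ↦ b` and `u, x, v ↦ u`. -/
def MtoLam : C(Mspace, Lam) where
  toFun := fun m => match m with
    | Mspace.a => Lam.a
    | Mspace.b => Lam.b
    | _ => Lam.u
  continuous_toFun := by
    rw [continuous_def]
    intro S hS
    obtain ⟨h1, h2⟩ := hS
    exact ⟨fun h => h1 h, fun h => ⟨h, h⟩, fun h => h2 h⟩


section Aux

lemma lam_isOpen {S : Set Lam} (h1 : Lam.a ∈ S → Lam.u ∈ S) (h2 : Lam.b ∈ S → Lam.u ∈ S) :
    IsOpen S := ⟨h1, h2⟩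

lemma m_isOpen {S : Set Mspace} (h1 : Mspace.a ∈ S → Mspace.u ∈ S)
    (h2 : Mspace.x ∈ S → Mspace.u ∈ S ∧ Mspace.v ∈ S)
    (h3 : Mspace.b ∈ S → Mspace.v ∈ S) : IsOpen S := ⟨h1, h2, h3⟩

@[simp] lemma MtoLam_a : MtoLam Mspace.a = Lam.a := rfl
@[simp] lemma MtoLam_u : MtoLam Mspace.u = Lam.u := rfl
@[simp] lemma MtoLam_x : MtoLam Mspace.x = Lam.u := rfl
@[simp] lemma MtoLam_v : MtoLam Mspace.v = Lam.u := rfl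
@[simp] lemma MtoLam_b : MtoLam Mspace.b = Lam.b := rfl

lemma lam_isOpen_au : IsOpen ({Lam.a, Lam.u} : Set Lam) :=
  lam_isOpen (fun _ => by simp) (fun h => by simp at h)

lemma lam_isOpen_ub : IsOpen ({Lam.u, Lam.b} : Set Lam) :=
  lam_isOpen (fun h => by simp at h) (fun _ => by simp)

lemma lam_isOpen_u : IsOpen ({Lam.u} : Set Lam) :=
  lam_isOpen (fun h => by simp at h) (fun h => by simp at h)

lemma lam_isClosed_a : IsClosed ({Lam.a} : Set Lam) := by
  rw [← isOpen_compl_iff]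
  exact lam_isOpen (fun h => absurd rfl h) (fun _ => by simp)

lemma lam_isClosed_b : IsClosed ({Lam.b} : Set Lam) := by
  rw [← isOpen_compl_iff]
  exact lam_isOpen (fun _ => by simp) (fun h => absurd rfl h)

lemma m_isClosed_xvb : IsClosed ({Mspace.x, Mspace.v, Mspace.b} : Set Mspace) := by
  rw [← isOpen_compl_iff]
  refine m_isOpen (fun _ => by simp) (fun h => absurd (by simp) h) (fun h => absurd (by simp) h)

lemma m_isClosed_aux : IsClosed ({Mspace.a, Mspace.u, Mspace.x} : Set Mspace) := by
  rw [← isOpen_compl_iff]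
  refine m_isOpen (fun h => absurd (by simp) h) (fun h => absurd (by simp) h) (fun _ => by simp)

/-- Hereditary-normality style separation in (pseudo-e)metric spaces: two sets,
each disjoint from the closure of the other, have disjoint open neighborhoods. -/
lemma sepNhds_of_separated {X : Type*} [PseudoEMetricSpace X] {s t : Set X}
    (h1 : Disjoint (closure s) t) (h2 : Disjoint s (closure t)) : SeparatedNhds s t := by
  refine ⟨{z | EMetric.infEdist z s < EMetric.infEdist z t},
      {z | EMetric.infEdist z t < EMetric.infEdist z s},
      isOpen_lt EMetric.continuous_infEdist EMetric.continuous_infEdist,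
      isOpen_lt EMetric.continuous_infEdist EMetric.continuous_infEdist, ?_, ?_, ?_⟩
  · intro z hz
    have h0 : EMetric.infEdist z s = 0 := EMetric.infEdist_zero_of_mem hz
    have hzc : z ∉ closure t := fun hc => (Set.disjoint_left.1 h2) hz hc
    have hpos : 0 < EMetric.infEdist z t := by
      rw [pos_iff_ne_zero]
      exact fun h => hzc (EMetric.mem_closure_iff_infEdist_zero.2 h)
    simpa [Set.mem_setOf_eq, h0] using hpos
  · intro z hz
    have h0 : EMetric.infEdist z t = 0 := EMetric.infEdist_zero_of_mem hz
    have hzc : z ∉ closure s := fun hc => (Set.disjoint_left.1 h1) hc hz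
    have hpos : 0 < EMetric.infEdist z s := by
      rw [pos_iff_ne_zero]
      exact fun h => hzc (EMetric.mem_closure_iff_infEdist_zero.2 h)
    simpa [Set.mem_setOf_eq, h0] using hpos
  · rw [Set.disjoint_left]
    intro z hz1 hz2
    exact absurd (Set.mem_setOf_eq ▸ hz2) (not_lt.2 (Set.mem_setOf_eq ▸ hz1).le)

end Aux

/-- The boundary inclusion `Sⁿ → Dⁿ⁺¹` has the left lifting property with respect to
`M → Λ`. -/
theorem stmt14 (n : ℕ) :
    HasLift (⟨Set.inclusion (Metric.sphere_subset_closedBall),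
        continuous_inclusion Metric.sphere_subset_closedBall⟩ :
      C((Metric.sphere (0 : EuclideanSpace ℝ (Fin (n + 1))) 1),
        (Metric.closedBall (0 : EuclideanSpace ℝ (Fin (n + 1))) 1))) MtoLam := by
  classical
  intro f g hfg
  set E := EuclideanSpace ℝ (Fin (n + 1)) with hE
  let ι : (Metric.sphere (0 : E) 1 : Set E) → (Metric.closedBall (0 : E) 1 : Set E) :=
    Set.inclusion Metric.sphere_subset_closedBall
  have key : ∀ s, MtoLam (f s) = g (ι s) := fun s => DFunLike.congr_fun hfg s
  have hinj : Function.Injective ι := Set.inclusion_injective Metric.sphere_subset_closedBall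
  -- images of closed sets of the sphere are closed in the ball
  have himg : ∀ C : Set (Metric.sphere (0 : E) 1 : Set E), IsClosed C → IsClosed (ι '' C) := by
    intro C hC
    have h1 : IsClosed (Subtype.val '' C : Set E) :=
      (Metric.isClosed_sphere).isClosedEmbedding_subtypeVal.isClosedMap C hC
    have h2 : ι '' C = Subtype.val ⁻¹' (Subtype.val '' C) := by
      ext z
      constructor
      · rintro ⟨s, hs, rfl⟩; exact ⟨s, hs, rfl⟩
      · rintro ⟨s, hs, hz⟩; exact ⟨s, hs, Subtype.ext hz⟩
    rw [h2]
    exact h1.preimage continuous_subtype_val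
  -- the relevant subsets of the ball
  set A : Set (Metric.closedBall (0 : E) 1 : Set E) := g ⁻¹' {Lam.a} with hA
  set B : Set (Metric.closedBall (0 : E) 1 : Set E) := g ⁻¹' {Lam.b} with hB
  set Fu : Set (Metric.closedBall (0 : E) 1 : Set E) := ι '' (f ⁻¹' {Mspace.u}) with hFu
  set Fv : Set (Metric.closedBall (0 : E) 1 : Set E) := ι '' (f ⁻¹' {Mspace.v}) with hFv
  set X1 : Set (Metric.closedBall (0 : E) 1 : Set E) :=
    ι '' (f ⁻¹' {Mspace.x, Mspace.v, Mspace.b}) with hX1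
  set X2 : Set (Metric.closedBall (0 : E) 1 : Set E) :=
    ι '' (f ⁻¹' {Mspace.a, Mspace.u, Mspace.x}) with hX2
  have hX1c : IsClosed X1 := himg _ (m_isClosed_xvb.preimage f.continuous)
  have hX2c : IsClosed X2 := himg _ (m_isClosed_aux.preimage f.continuous)
  have hAc : IsClosed A := lam_isClosed_a.preimage g.continuous
  have hBc : IsClosed B := lam_isClosed_b.preimage g.continuous
  -- basic membership facts
  have hgA : ∀ z, z ∈ A ↔ g z = Lam.a := fun z => Set.mem_singleton_iff
  have hgB : ∀ z, z ∈ B ↔ g z = Lam.b := fun z => Set.mem_singleton_iff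
  have hX1mem : ∀ s, f s ∈ ({Mspace.x, Mspace.v, Mspace.b} : Set Mspace) → g (ι s) = Lam.u ∨ g (ι s) = Lam.b := by
    intro s hs
    rw [← key s]
    rcases hs with h | h | h
    · simp [h]
    · simp [h]
    · simp [Set.mem_singleton_iff.1 h]
  have hX2mem : ∀ s, f s ∈ ({Mspace.a, Mspace.u, Mspace.x} : Set Mspace) → g (ι s) = Lam.a ∨ g (ι s) = Lam.u := by
    intro s hs
    rw [← key s]
    rcases hs with h | h | h
    · simp [h]
    · simp [h]
    · simp [Set.mem_singleton_iff.1 h]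
  -- open neighborhoods showing the two pairs are separated
  have hOP : IsOpen ((g ⁻¹' {Lam.a, Lam.u}) \ (B ∪ X1)) :=
    (lam_isOpen_au.preimage g.continuous).sdiff (hBc.union hX1c)
  have hOQ : IsOpen ((g ⁻¹' {Lam.u, Lam.b}) \ (A ∪ X2)) :=
    (lam_isOpen_ub.preimage g.continuous).sdiff (hAc.union hX2c)
  have hPOP : A ∪ Fu ⊆ (g ⁻¹' {Lam.a, Lam.u}) \ (B ∪ X1) := by
    rintro z (hz | ⟨s, hs, rfl⟩)
    · have hga : g z = Lam.a := (hgA z).1 hz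
      refine ⟨by simp [hga], ?_⟩
      rintro ((hb : g z = Lam.b) | ⟨s, hs3, rfl⟩)
      · rw [hga] at hb; exact Lam.noConfusion hb
      · rcases hX1mem s hs3 with h | h <;> rw [hga] at h <;> exact Lam.noConfusion h
    · have hgu : g (ι s) = Lam.u := by
        rw [← key s, Set.mem_singleton_iff.1 (Set.mem_preimage.1 hs)]; rfl
      refine ⟨by simp [hgu], ?_⟩
      rintro ((hb : g (ι s) = Lam.b) | ⟨s', hs3, hss⟩)
      · rw [hgu] at hb; exact Lam.noConfusion hb
      · cases hinj hss
        rcases hs3 with h | h | h <;> rw [hs] at h <;> exact Mspace.noConfusion h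
  have hQOQ : B ∪ Fv ⊆ (g ⁻¹' {Lam.u, Lam.b}) \ (A ∪ X2) := by
    rintro z (hz | ⟨s, hs, rfl⟩)
    · have hgb : g z = Lam.b := (hgB z).1 hz
      refine ⟨by simp [hgb], ?_⟩
      rintro ((ha : g z = Lam.a) | ⟨s, hs3, rfl⟩)
      · rw [hgb] at ha; exact Lam.noConfusion ha
      · rcases hX2mem s hs3 with h | h <;> rw [hgb] at h <;> exact Lam.noConfusion h
    · have hgu : g (ι s) = Lam.u := by
        rw [← key s, Set.mem_singleton_iff.1 (Set.mem_preimage.1 hs)]; rfl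
      refine ⟨by simp [hgu], ?_⟩
      rintro ((ha : g (ι s) = Lam.a) | ⟨s', hs3, hss⟩)
      · rw [hgu] at ha; exact Lam.noConfusion ha
      · cases hinj hss
        rcases hs3 with h | h | h <;> rw [hs] at h <;> exact Mspace.noConfusion h
  have hdisjPQ : Disjoint ((g ⁻¹' {Lam.a, Lam.u}) \ (B ∪ X1)) (B ∪ Fv) := by
    rw [Set.disjoint_left]
    rintro z ⟨_, hz2⟩ (hb | ⟨s, hs, rfl⟩)
    · exact hz2 (Or.inl hb)
    · refine hz2 (Or.inr ⟨s, ?_, rfl⟩)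
      have hv : f s = Mspace.v := Set.mem_singleton_iff.1 (Set.mem_preimage.1 hs)
      simp only [Set.mem_preimage, Set.mem_insert_iff, Set.mem_singleton_iff, hv]
      tauto
  have hdisjQP : Disjoint ((g ⁻¹' {Lam.u, Lam.b}) \ (A ∪ X2)) (A ∪ Fu) := by
    rw [Set.disjoint_left]
    rintro z ⟨_, hz2⟩ (ha | ⟨s, hs, rfl⟩)
    · exact hz2 (Or.inl ha)
    · refine hz2 (Or.inr ⟨s, ?_, rfl⟩)
      have hv : f s = Mspace.u := Set.mem_singleton_iff.1 (Set.mem_preimage.1 hs)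
      simp only [Set.mem_preimage, Set.mem_insert_iff, Set.mem_singleton_iff, hv]
      tauto
  -- separated neighborhoods
  have hsep : SeparatedNhds (A ∪ Fu) (B ∪ Fv) := by
    apply sepNhds_of_separated
    · -- Disjoint (closure (A ∪ Fu)) (B ∪ Fv)
      have h1 : closure (A ∪ Fu) ⊆ ((g ⁻¹' {Lam.u, Lam.b}) \ (A ∪ X2))ᶜ := by
        rw [← IsClosed.closure_eq (isClosed_compl_iff.2 hOQ)]
        exact closure_mono (Set.subset_compl_iff_disjoint_left.2 hdisjQP)
      rw [Set.disjoint_left]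
      intro z hz1 hz2
      exact h1 hz1 (hQOQ hz2)
    · -- Disjoint (A ∪ Fu) (closure (B ∪ Fv))
      have h1 : closure (B ∪ Fv) ⊆ ((g ⁻¹' {Lam.a, Lam.u}) \ (B ∪ X1))ᶜ := by
        rw [← IsClosed.closure_eq (isClosed_compl_iff.2 hOP)]
        exact closure_mono (Set.subset_compl_iff_disjoint_left.2 hdisjPQ)
      rw [Set.disjoint_left]
      intro z hz1 hz2
      exact h1 hz2 (hPOP hz1)
  obtain ⟨Wa, Wb, hWao, hWbo, hPWa, hQWb, hWdisj⟩ := hsep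
  set Vu : Set (Metric.closedBall (0 : E) 1 : Set E) := Wa \ X1 with hVu
  set Vv : Set (Metric.closedBall (0 : E) 1 : Set E) := Wb \ X2 with hVv
  have hVuo : IsOpen Vu := hWao.sdiff hX1c
  have hVvo : IsOpen Vv := hWbo.sdiff hX2c
  have hVuVv : Disjoint Vu Vv :=
    (hWdisj.mono Set.diff_subset Set.diff_subset)
  -- the lift
  set d : (Metric.closedBall (0 : E) 1 : Set E) → Mspace := fun z =>
    if g z = Lam.a then Mspace.a
    else if g z = Lam.b then Mspace.b
    else if z ∈ Vu then Mspace.u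
    else if z ∈ Vv then Mspace.v
    else Mspace.x with hd
  have hda : ∀ z, g z = Lam.a → d z = Mspace.a := by intro z h; simp [hd, h]
  have hdb : ∀ z, g z = Lam.b → d z = Mspace.b := by intro z h; simp [hd, h]
  have hdu : ∀ z, g z = Lam.u → z ∈ Vu → d z = Mspace.u := by
    intro z h hz; simp [hd, h, hz]
  have hdv : ∀ z, g z = Lam.u → z ∉ Vu → z ∈ Vv → d z = Mspace.v := by
    intro z h hz1 hz2; simp [hd, h, hz1, hz2]
  have hdx : ∀ z, g z = Lam.u → z ∉ Vu → z ∉ Vv → d z = Mspace.x := by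
    intro z h hz1 hz2; simp [hd, h, hz1, hz2]
  -- continuity of d
  have hdc : Continuous d := by
    rw [continuous_def]
    intro O hO
    obtain ⟨hO1, hO2, hO3⟩ := hO
    rw [isOpen_iff_forall_mem_open]
    intro z hz
    rw [Set.mem_preimage] at hz
    cases hgz : g z with
    | a =>
      rw [hda z hgz] at hz
      have huO : Mspace.u ∈ O := hO1 hz
      have hzX1 : z ∉ X1 := by
        rintro ⟨s, hs, rfl⟩
        rcases hX1mem s hs with h | h <;> rw [hgz] at h <;> exact Lam.noConfusion h
      refine ⟨((g ⁻¹' {Lam.a, Lam.u}) ∩ Wa) \ X1, ?_, ?_, ?_⟩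
      · rintro w ⟨⟨hw1, hw2⟩, hw3⟩
        rcases hw1 with hwa | hwu
        · rw [Set.mem_preimage, hda w hwa]; exact hz
        · rw [Set.mem_preimage, hdu w hwu ⟨hw2, hw3⟩]; exact huO
      · exact ((lam_isOpen_au.preimage g.continuous).inter hWao).sdiff hX1c
      · exact ⟨⟨by simp [hgz], hPWa (Or.inl ((hgA z).2 hgz))⟩, hzX1⟩
    | b =>
      rw [hdb z hgz] at hz
      have hvO : Mspace.v ∈ O := hO3 hz
      have hzX2 : z ∉ X2 := by
        rintro ⟨s, hs, rfl⟩
        rcases hX2mem s hs with h | h <;> rw [hgz] at h <;> exact Lam.noConfusion h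
      refine ⟨((g ⁻¹' {Lam.u, Lam.b}) ∩ Wb) \ X2, ?_, ?_, ?_⟩
      · rintro w ⟨⟨hw1, hw2⟩, hw3⟩
        rcases hw1 with hwu | hwb
        · have hwVu : w ∉ Vu := fun hw => Set.disjoint_left.1 hWdisj hw.1 hw2
          rw [Set.mem_preimage, hdv w hwu hwVu ⟨hw2, hw3⟩]; exact hvO
        · rw [Set.mem_preimage, hdb w hwb]; exact hz
      · exact ((lam_isOpen_ub.preimage g.continuous).inter hWbo).sdiff hX2c
      · exact ⟨⟨by simp [hgz], hQWb (Or.inl ((hgB z).2 hgz))⟩, hzX2⟩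
    | u =>
      by_cases hzu : z ∈ Vu
      · rw [hdu z hgz hzu] at hz
        refine ⟨g ⁻¹' {Lam.u} ∩ Vu, ?_,
          (lam_isOpen_u.preimage g.continuous).inter hVuo, ⟨by simp [hgz], hzu⟩⟩
        rintro w ⟨hw1, hw2⟩
        rw [Set.mem_preimage, hdu w hw1 hw2]
        exact hz
      · by_cases hzv : z ∈ Vv
        · rw [hdv z hgz hzu hzv] at hz
          refine ⟨g ⁻¹' {Lam.u} ∩ Vv, ?_,
            (lam_isOpen_u.preimage g.continuous).inter hVvo, ⟨by simp [hgz], hzv⟩⟩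
          rintro w ⟨hw1, hw2⟩
          have hwVu : w ∉ Vu := fun hw => Set.disjoint_left.1 hVuVv hw hw2
          rw [Set.mem_preimage, hdv w hw1 hwVu hw2]
          exact hz
        · rw [hdx z hgz hzu hzv] at hz
          obtain ⟨huO, hvO⟩ := hO2 hz
          refine ⟨g ⁻¹' {Lam.u}, ?_, lam_isOpen_u.preimage g.continuous, by simp [hgz]⟩
          intro w hw1
          rw [Set.mem_preimage]
          by_cases h1 : w ∈ Vu
          · rw [hdu w hw1 h1]; exact huO
          · by_cases h2 : w ∈ Vv
            · rw [hdv w hw1 h1 h2]; exact hvO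
            · rw [hdx w hw1 h1 h2]; exact hz
  refine ⟨⟨d, hdc⟩, ?_, ?_⟩
  · ext s
    show d (ι s) = f s
    cases hfs : f s with
    | a =>
      have hga : g (ι s) = Lam.a := by rw [← key s, hfs]; rfl
      rw [hda _ hga]
    | u =>
      have hgu : g (ι s) = Lam.u := by rw [← key s, hfs]; rfl
      have hmem : ι s ∈ Vu := by
        refine ⟨hPWa (Or.inr ⟨s, by simp [hfs], rfl⟩), ?_⟩
        rintro ⟨s', hs', hss⟩
        cases hinj hss
        rcases hs' with h | h | h <;> rw [hfs] at h <;> exact Mspace.noConfusion h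
      rw [hdu _ hgu hmem]
    | x =>
      have hgu : g (ι s) = Lam.u := by rw [← key s, hfs]; rfl
      have h1 : ι s ∉ Vu := fun hw => hw.2 ⟨s, by simp [hfs], rfl⟩
      have h2 : ι s ∉ Vv := fun hw => hw.2 ⟨s, by simp [hfs], rfl⟩
      rw [hdx _ hgu h1 h2]
    | v =>
      have hgu : g (ι s) = Lam.u := by rw [← key s, hfs]; rfl
      have hWbm : ι s ∈ Wb := hQWb (Or.inr ⟨s, by simp [hfs], rfl⟩)
      have h1 : ι s ∉ Vu := fun hw => Set.disjoint_left.1 hWdisj hw.1 hWbm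
      have h2 : ι s ∈ Vv := by
        refine ⟨hWbm, ?_⟩
        rintro ⟨s', hs', hss⟩
        cases hinj hss
        rcases hs' with h | h | h <;> rw [hfs] at h <;> exact Mspace.noConfusion h
      rw [hdv _ hgu h1 h2]
    | b =>
      have hgb : g (ι s) = Lam.b := by rw [← key s, hfs]; rfl
      rw [hdb _ hgb]
  · ext z
    show MtoLam (d z) = g z
    cases hgz : g z with
    | a => rw [hda z hgz]; rfl
    | b => rw [hdb z hgz]; rfl
    | u =>
      by_cases h1 : z ∈ Vu
      · rw [hdu z hgz h1]; rfl
      · by_cases h2 : z ∈ Vv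
        · rw [hdv z hgz h1 h2]; rfl
        · rw [hdx z hgz h1 h2]; rfl
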